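/- arXiv:2006.11973 — 3 statements merged into one kernel-verified Lean document; each statement's English description precedes it below -/
import Mathlib

section
/- Discrete Hodge theorem: for a chain complex of finite-dimensional real inner product spaces with differential d and adjoint d*, and Hodge Laplacian H = d d* + d* d, the kernel of H restricted to degree k is isomorphic to the k-th homology of the complex; in particular dim ker(H_k) = dim H_k(C). -/
open scoped InnerProductSpace RealInnerProductSpace

/-!
A harmonic element `x` satisfies `0 = re ⟪H x, x⟫ = ‖d* x‖² + ‖d x‖²`, so the harmonic space in
degree `k` is `ker d ∩ (range d)ᗮ`. Since `range d ≤ ker d`, orthogonal projection onto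
`range d` sends each cycle `z` to the harmonic representative `z - P z` of its class, which
identifies `ker d ∩ (range d)ᗮ` with `ker d / range d`.
-/

namespace Submodule

variable {𝕜 E : Type*} [RCLike 𝕜] [NormedAddCommGroup E] [InnerProductSpace 𝕜 E]

noncomputable def infOrthogonalEquivQuotient {K Z : Submodule 𝕜 E} [K.HasOrthogonalProjection]
    (hKZ : K ≤ Z) : ↥(Z ⊓ Kᗮ) ≃ₗ[𝕜] Z ⧸ K.comap Z.subtype :=
  LinearEquiv.ofBijective ((K.comap Z.subtype).mkQ ∘ₗ inclusion inf_le_left) <| by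
    constructor
    · rw [← LinearMap.ker_eq_bot, eq_bot_iff]
      rintro ⟨x, _, hxK_perp⟩ hx
      have hxK : x ∈ K := by simpa [Quotient.mk_eq_zero] using hx
      exact Subtype.ext (inner_self_eq_zero.mp (hxK_perp x hxK))
    · intro q
      obtain ⟨⟨z, hz⟩, rfl⟩ := mkQ_surjective _ q
      have hPz : K.starProjection z ∈ K := K.starProjection_apply_mem z
      refine ⟨⟨z - K.starProjection z, Z.sub_mem hz (hKZ hPz),
        K.sub_starProjection_mem_orthogonal z⟩, ?_⟩
      simp [Quotient.eq, hPz]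

end Submodule

namespace LinearMap

variable {𝕜 U V W : Type*} [RCLike 𝕜]
  [NormedAddCommGroup U] [InnerProductSpace 𝕜 U] [NormedAddCommGroup V] [InnerProductSpace 𝕜 V]
  [NormedAddCommGroup W] [InnerProductSpace 𝕜 W]
  {a : U →ₗ[𝕜] V} {a' : V →ₗ[𝕜] U} {b : V →ₗ[𝕜] W} {b' : W →ₗ[𝕜] V}

theorem ker_eq_orthogonal_range_of_inner_map_eq (ha : ∀ x y, ⟪a x, y⟫_𝕜 = ⟪x, a' y⟫_𝕜) :
    ker a' = (range a)ᗮ := by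
  ext y
  simp only [mem_ker, Submodule.mem_orthogonal, mem_range, forall_exists_index,
    forall_apply_eq_imp_iff, ha]
  exact ⟨fun hy x => by rw [hy, inner_zero_right], fun hy => inner_self_eq_zero.mp (hy _)⟩

theorem re_inner_laplacian_self (ha : ∀ x y, ⟪a x, y⟫_𝕜 = ⟪x, a' y⟫_𝕜)
    (hb : ∀ x y, ⟪b x, y⟫_𝕜 = ⟪x, b' y⟫_𝕜) (x : V) :
    RCLike.re ⟪(a ∘ₗ a' + b' ∘ₗ b) x, x⟫_𝕜 = ‖a' x‖ ^ 2 + ‖b x‖ ^ 2 := by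
  rw [add_apply, comp_apply, comp_apply, inner_add_left, ha, ← inner_conj_symm (b' (b x)), ← hb,
    map_add, RCLike.conj_re, inner_self_eq_norm_sq, inner_self_eq_norm_sq]

theorem ker_laplacian (ha : ∀ x y, ⟪a x, y⟫_𝕜 = ⟪x, a' y⟫_𝕜)
    (hb : ∀ x y, ⟪b x, y⟫_𝕜 = ⟪x, b' y⟫_𝕜) :
    ker (a ∘ₗ a' + b' ∘ₗ b) = ker b ⊓ ker a' := by
  ext x
  simp only [Submodule.mem_inf, mem_ker]
  constructor
  · intro hx
    have h := re_inner_laplacian_self ha hb x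
    rw [hx, inner_zero_left, map_zero] at h
    obtain ⟨ha'x, hbx⟩ := (add_eq_zero_iff_of_nonneg (sq_nonneg _) (sq_nonneg _)).mp h.symm
    exact ⟨by simpa using hbx, by simpa using ha'x⟩
  · rintro ⟨hbx, ha'x⟩
    simp [hbx, ha'x]

end LinearMap

/-- Discrete Hodge theorem: for a (cochain) complex of finite-dimensional real inner product
spaces with differential `d`, adjoint `δ = d*`, and Hodge Laplacian `H = d d* + d* d`, the
kernel of `H` in a given degree is isomorphic to the homology of the complex in that degree;
in particular they have the same dimension. -/
theorem discrete_hodge_theorem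
    (V : ℤ → Type) [∀ k, NormedAddCommGroup (V k)] [∀ k, InnerProductSpace ℝ (V k)]
    [∀ k, FiniteDimensional ℝ (V k)]
    (d : ∀ k : ℤ, V k →ₗ[ℝ] V (k + 1))
    (δ : ∀ k : ℤ, V (k + 1) →ₗ[ℝ] V k)
    (hdd : ∀ (k : ℤ) (x : V k), d (k + 1) (d k x) = 0)
    (hadj : ∀ (k : ℤ) (x : V k) (y : V (k + 1)), ⟪d k x, y⟫ = ⟪x, δ k y⟫)
    (k : ℤ) :
    Nonempty
      (LinearMap.ker ((d k).comp (δ k) + (δ (k + 1)).comp (d (k + 1))) ≃ₗ[ℝ]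
        (LinearMap.ker (d (k + 1)) ⧸
          (LinearMap.range (d k)).comap (LinearMap.ker (d (k + 1))).subtype)) ∧
    Module.finrank ℝ
        (LinearMap.ker ((d k).comp (δ k) + (δ (k + 1)).comp (d (k + 1)))) =
      Module.finrank ℝ
        (LinearMap.ker (d (k + 1)) ⧸
          (LinearMap.range (d k)).comap (LinearMap.ker (d (k + 1))).subtype) := by
  have hBZ : LinearMap.range (d k) ≤ LinearMap.ker (d (k + 1)) := by
    rintro _ ⟨x, rfl⟩
    exact hdd k x
  have hharmonic : LinearMap.ker ((d k).comp (δ k) + (δ (k + 1)).comp (d (k + 1))) =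
      LinearMap.ker (d (k + 1)) ⊓ (LinearMap.range (d k))ᗮ := by
    rw [LinearMap.ker_laplacian (hadj k) (hadj (k + 1)),
      LinearMap.ker_eq_orthogonal_range_of_inner_map_eq (hadj k)]
  let e := (LinearEquiv.ofEq _ _ hharmonic).trans (Submodule.infOrthogonalEquivQuotient hBZ)
  exact ⟨⟨e⟩, e.finrank_eq⟩
end

section
/- Discrete McKean–Singer theorem: let D be a symmetric linear operator on a finite-dimensional graded real inner product space V = V_even ⊕ V_odd that is odd with respect to the grading (D maps V_even to V_odd and vice versa), and let H = D². Then for every t ≥ 0, the supertrace str(e^{−tH}) = tr(e^{−tH}|_{V_even}) − tr(e^{−tH}|_{V_odd}) is independent of t, equals dim(ker H ∩ V_even) − dim(ker H ∩ V_odd), and also equals str(id) = dim V_even − dim V_odd. -/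
open scoped RealInnerProductSpace

set_option synthInstance.maxHeartbeats 1000000 in
set_option maxHeartbeats 1000000 in
open Module NormedSpace in
/-- Discrete McKean–Singer theorem: let `D` be a symmetric operator on a finite-dimensional
graded real inner product space `V = V_even ⊕ V_odd` (with `V_odd = V_evenᗮ`) which is odd
for the grading, and let `H = D²`.  Then for every `t ≥ 0` the supertrace
`str(e^{-tH}) = tr(ε ∘ e^{-tH})` (where `ε` is the grading operator, `id` on `V_even` and
`-id` on `V_odd`) is independent of `t`: it equals `dim V_even - dim V_odd = str(id)`, and it
also equals `dim (ker H ∩ V_even) - dim (ker H ∩ V_odd)`. -/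
theorem discrete_mckean_singer
    (V : Type) [NormedAddCommGroup V] [InnerProductSpace ℝ V] [FiniteDimensional ℝ V]
    (Veven : Submodule ℝ V)
    (D : V →L[ℝ] V)
    (hsym : ∀ x y : V, ⟪D x, y⟫ = ⟪x, D y⟫)
    (hodd₁ : ∀ x ∈ Veven, D x ∈ Vevenᗮ)
    (hodd₂ : ∀ x ∈ Vevenᗮ, D x ∈ Veven)
    (ε : V →L[ℝ] V)
    (hε₁ : ∀ x ∈ Veven, ε x = x)
    (hε₂ : ∀ x ∈ Vevenᗮ, ε x = -x)
    (t : ℝ) (ht : 0 ≤ t) :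
    LinearMap.trace ℝ V
        ((ε.comp (NormedSpace.exp ((-t) • D.comp D)) : V →L[ℝ] V) : V →ₗ[ℝ] V) =
      (Module.finrank ℝ Veven : ℝ) - (Module.finrank ℝ Vevenᗮ : ℝ) ∧
    LinearMap.trace ℝ V
        ((ε.comp (NormedSpace.exp ((-t) • D.comp D)) : V →L[ℝ] V) : V →ₗ[ℝ] V) =
      (Module.finrank ℝ ↥(LinearMap.ker ((D.comp D : V →L[ℝ] V) : V →ₗ[ℝ] V) ⊓ Veven) : ℝ) -
        (Module.finrank ℝ ↥(LinearMap.ker ((D.comp D : V →L[ℝ] V) : V →ₗ[ℝ] V) ⊓ Vevenᗮ) : ℝ) := by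
  have hcompl : IsCompl Veven Vevenᗮ := Submodule.isCompl_orthogonal_of_hasOrthogonalProjection
  have hsplit : ∀ x : V, ∃ a ∈ Veven, ∃ b ∈ Vevenᗮ, x = a + b := by
    intro x
    have hx : x ∈ Veven ⊔ Vevenᗮ := by rw [hcompl.sup_eq_top]; trivial
    obtain ⟨a, ha, b, hb, h⟩ := Submodule.mem_sup.mp hx
    exact ⟨a, ha, b, hb, h.symm⟩
  -- ε anticommutes with D
  have hεD : ε * D = -(D * ε) := by
    ext x
    obtain ⟨a, ha, b, hb, rfl⟩ := hsplit x
    simp only [ContinuousLinearMap.mul_apply, map_add, ContinuousLinearMap.neg_apply]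
    rw [hε₂ _ (hodd₁ a ha), hε₁ _ (hodd₂ b hb), hε₁ a ha, hε₂ b hb]
    simp [map_neg]
  set H : V →L[ℝ] V := D.comp D with hHdef
  have hDH : Commute D H := (Commute.refl D).mul_right (Commute.refl D)
  -- the trace functional
  let φ : (V →L[ℝ] V) →ₗ[ℝ] ℝ :=
    { toFun := fun B => LinearMap.trace ℝ V ((ε.comp B : V →L[ℝ] V) : V →ₗ[ℝ] V)
      map_add' := fun B C => by
        simp only [ContinuousLinearMap.comp_add, ContinuousLinearMap.coe_add, map_add]
      map_smul' := fun c B => by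
        simp only [ContinuousLinearMap.comp_smul, ContinuousLinearMap.coe_smul, map_smul,
          RingHom.id_apply] }
  -- trace of a product of continuous linear maps, cyclically
  have htr_mul : ∀ B C : V →L[ℝ] V,
      LinearMap.trace ℝ V ((B * C : V →L[ℝ] V) : V →ₗ[ℝ] V) =
        LinearMap.trace ℝ V ((C * B : V →L[ℝ] V) : V →ₗ[ℝ] V) := by
    intro B C
    have h1 : ((B * C : V →L[ℝ] V) : V →ₗ[ℝ] V) =
        (B : V →ₗ[ℝ] V) * (C : V →ₗ[ℝ] V) := rfl
    have h2 : ((C * B : V →L[ℝ] V) : V →ₗ[ℝ] V) =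
        (C : V →ₗ[ℝ] V) * (B : V →ₗ[ℝ] V) := rfl
    rw [h1, h2, LinearMap.trace_mul_comm]
  -- the key vanishing
  have hkey : ∀ e : V →L[ℝ] V, Commute D e →
      LinearMap.trace ℝ V ((ε * (e * (D * D)) : V →L[ℝ] V) : V →ₗ[ℝ] V) = 0 := by
    intro e he
    have h1 : ε * (e * (D * D)) = (ε * e * D) * D := by simp only [mul_assoc]
    have h2 : ε * (e * (D * D)) = -(D * (ε * e * D)) := by
      calc ε * (e * (D * D)) = ε * ((e * D) * D) := by simp only [mul_assoc]
        _ = ε * ((D * e) * D) := by rw [← he.eq]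
        _ = (ε * D) * (e * D) := by simp only [mul_assoc]
        _ = (-(D * ε)) * (e * D) := by rw [hεD]
        _ = -(D * (ε * e * D)) := by simp only [neg_mul, mul_assoc]
    have := htr_mul (ε * e * D) D
    rw [← h1] at this
    have h3 : LinearMap.trace ℝ V ((D * (ε * e * D) : V →L[ℝ] V) : V →ₗ[ℝ] V) =
        LinearMap.trace ℝ V ((ε * (e * (D * D)) : V →L[ℝ] V) : V →ₗ[ℝ] V) := by
      rw [← this]
    have h4 : ((-(D * (ε * e * D)) : V →L[ℝ] V) : V →ₗ[ℝ] V) =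
        -((D * (ε * e * D) : V →L[ℝ] V) : V →ₗ[ℝ] V) := rfl
    have h5 := congrArg (fun m : V →L[ℝ] V =>
      LinearMap.trace ℝ V ((m : V →ₗ[ℝ] V))) h2
    simp only [h4, map_neg, h3] at h5
    linarith
  -- the function is constant
  set f : ℝ → ℝ := fun u => φ (exp (u • (-H))) with hf
  have hderiv : ∀ s : ℝ, HasDerivAt f 0 s := by
    intro s
    have h1 := hasDerivAt_exp_smul_const (𝕂 := ℝ) (-H) s
    have h2 := ((LinearMap.toContinuousLinearMap φ).hasFDerivAt).comp_hasDerivAt s h1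
    have h3 : HasDerivAt f (φ (exp (s • (-H)) * (-H))) s := h2
    convert h3 using 1
    have hc : Commute D (exp (s • (-H))) := by
      apply Commute.exp_right
      exact (hDH.neg_right).smul_right s
    have : φ (exp (s • (-H)) * (-H)) =
        - LinearMap.trace ℝ V
            ((ε * (exp (s • (-H)) * (D * D)) : V →L[ℝ] V) : V →ₗ[ℝ] V) := by
      have he : exp (s • (-H)) * (-H) = -(exp (s • (-H)) * (D * D)) := by
        rw [mul_neg]; rfl
      show LinearMap.trace ℝ V ((ε.comp (exp (s • (-H)) * (-H)) : V →L[ℝ] V) : V →ₗ[ℝ] V) = _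
      rw [he]
      have : ε.comp (-(exp (s • (-H)) * (D * D))) =
          -(ε * (exp (s • (-H)) * (D * D))) := by
        ext x; simp [ContinuousLinearMap.mul_apply]
      rw [this]
      have h4 : ((-(ε * (exp (s • (-H)) * (D * D))) : V →L[ℝ] V) : V →ₗ[ℝ] V) =
          -((ε * (exp (s • (-H)) * (D * D)) : V →L[ℝ] V) : V →ₗ[ℝ] V) := rfl
      rw [h4, map_neg]
    rw [this, hkey _ hc, neg_zero]
  have hconst : f t = f 0 := by
    have hdiff : Differentiable ℝ f := fun s => (hderiv s).differentiableAt
    have : ∀ s, deriv f s = 0 := fun s => (hderiv s).deriv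
    exact is_const_of_deriv_eq_zero hdiff this t 0
  -- value at 0: trace of ε
  have htrε : LinearMap.trace ℝ V (ε : V →ₗ[ℝ] V) =
      (finrank ℝ Veven : ℝ) - (finrank ℝ Vevenᗮ : ℝ) := by
    set e := Submodule.prodEquivOfIsCompl Veven Vevenᗮ hcompl with hedef
    have hconj : (LinearEquiv.conj e.symm) (ε : V →ₗ[ℝ] V) =
        LinearMap.prodMap LinearMap.id (-LinearMap.id) := by
      apply LinearMap.ext
      rintro ⟨a, b⟩
      rw [LinearEquiv.conj_apply]
      simp only [LinearMap.coe_comp, Function.comp_apply, LinearEquiv.coe_coe,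
        LinearEquiv.symm_symm]
      have h1 : e (a, b) = (a : V) + (b : V) := rfl
      rw [h1, ContinuousLinearMap.coe_coe]
      have h2 : ε ((a : V) + (b : V)) = (a : V) - (b : V) := by
        rw [map_add, hε₁ _ a.2, hε₂ _ b.2]; abel
      rw [h2, LinearEquiv.symm_apply_eq]
      show (a : V) - (b : V) = (a : V) + ((-b : Vevenᗮ) : V)
      push_cast
      abel
    have := LinearMap.trace_conj' (ε : V →ₗ[ℝ] V) e.symm
    rw [hconj] at this
    rw [← this, LinearMap.trace_prodMap', LinearMap.trace_id, map_neg, LinearMap.trace_id]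
    ring
  have hf0 : f 0 = (finrank ℝ Veven : ℝ) - (finrank ℝ Vevenᗮ : ℝ) := by
    have : f 0 = φ (exp ((0 : ℝ) • (-H))) := rfl
    rw [this, zero_smul, exp_zero]
    show LinearMap.trace ℝ V ((ε.comp 1 : V →L[ℝ] V) : V →ₗ[ℝ] V) = _
    rw [ContinuousLinearMap.one_def, ContinuousLinearMap.comp_id]
    exact htrε
  -- the LHS is f t
  have hlhs : LinearMap.trace ℝ V
      ((ε.comp (NormedSpace.exp ((-t) • D.comp D)) : V →L[ℝ] V) : V →ₗ[ℝ] V) = f t := by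
    have : (-t) • D.comp D = t • (-H) := by rw [hHdef, neg_smul, smul_neg]
    rw [this]
    rfl
  rw [hlhs, hconst, hf0]
  refine ⟨rfl, ?_⟩
  -- dimension counting
  set K := LinearMap.ker (D : V →ₗ[ℝ] V) with hK
  have hkerH : LinearMap.ker ((D.comp D : V →L[ℝ] V) : V →ₗ[ℝ] V) = K := by
    ext x
    constructor
    · intro h
      have h0 : D (D x) = 0 := h
      have h1 : ⟪D x, D x⟫ = 0 := by
        rw [hsym x (D x), h0, inner_zero_right]
      exact inner_self_eq_zero.mp h1
    · intro h
      have h0 : D x = 0 := h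
      show D (D x) = 0
      rw [h0, map_zero]
  have hrk : Disjoint (LinearMap.range (D : V →ₗ[ℝ] V)) K := by
    rw [Submodule.disjoint_def]
    rintro y ⟨x, rfl⟩ hy
    have hy0 : D (D x) = 0 := hy
    have h1 : ⟪D x, D x⟫ = 0 := by
      rw [hsym x (D x), hy0, inner_zero_right]
    exact inner_self_eq_zero.mp h1
  set De := (D : V →ₗ[ℝ] V).domRestrict Veven with hDe
  set Do := (D : V →ₗ[ℝ] V).domRestrict Vevenᗮ with hDo
  have hker_comap : ∀ W : Submodule ℝ V,
      Module.finrank ℝ (LinearMap.ker ((D : V →ₗ[ℝ] V).domRestrict W)) =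
        Module.finrank ℝ (K ⊓ W : Submodule ℝ V) := by
    intro W
    rw [LinearMap.ker_domRestrict]
    have h1 : Submodule.comap W.subtype K = Submodule.comap W.subtype (K ⊓ W) := by
      ext x
      simp only [Submodule.mem_comap, Submodule.mem_inf]
      exact ⟨fun h => ⟨h, x.2⟩, fun h => h.1⟩
    rw [h1]
    exact (Submodule.comapSubtypeEquivOfLe (inf_le_right : K ⊓ W ≤ W)).finrank_eq
  have hineq : ∀ (W W' : Submodule ℝ V), (∀ x ∈ W, D x ∈ W') →
      Module.finrank ℝ (LinearMap.range ((D : V →ₗ[ℝ] V).domRestrict W)) +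
        Module.finrank ℝ (K ⊓ W' : Submodule ℝ V) ≤ Module.finrank ℝ W' := by
    intro W W' hmap
    set R := LinearMap.range ((D : V →ₗ[ℝ] V).domRestrict W) with hR
    have hRle : R ≤ W' := by
      rintro y ⟨x, rfl⟩
      exact hmap x x.2
    have hRleD : R ≤ LinearMap.range (D : V →ₗ[ℝ] V) := by
      rintro y ⟨x, rfl⟩
      exact ⟨x, rfl⟩
    have hdisj : Disjoint R (K ⊓ W') := hrk.mono hRleD inf_le_left
    have hsup : R ⊔ (K ⊓ W') ≤ W' := sup_le hRle inf_le_right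
    calc Module.finrank ℝ R + Module.finrank ℝ (K ⊓ W' : Submodule ℝ V)
        = Module.finrank ℝ (R ⊔ (K ⊓ W') : Submodule ℝ V) +
            Module.finrank ℝ (R ⊓ (K ⊓ W') : Submodule ℝ V) :=
          (Submodule.finrank_sup_add_finrank_inf_eq _ _).symm
      _ = Module.finrank ℝ (R ⊔ (K ⊓ W') : Submodule ℝ V) := by
          rw [hdisj.eq_bot, finrank_bot, add_zero]
      _ ≤ Module.finrank ℝ W' := Submodule.finrank_mono hsup
  have hrn_e := LinearMap.finrank_range_add_finrank_ker De
  have hrn_o := LinearMap.finrank_range_add_finrank_ker Do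
  rw [hker_comap Veven] at hrn_e
  rw [hker_comap Vevenᗮ] at hrn_o
  have hie := hineq Veven Vevenᗮ hodd₁
  have hio := hineq Vevenᗮ Veven hodd₂
  rw [← hDe] at hie
  rw [← hDo] at hio
  have hnat : Module.finrank ℝ Veven + Module.finrank ℝ (K ⊓ Vevenᗮ : Submodule ℝ V) =
      Module.finrank ℝ Vevenᗮ + Module.finrank ℝ (K ⊓ Veven : Submodule ℝ V) := by
    omega
  rw [hkerH]
  have := congrArg (fun n : ℕ => (n : ℝ)) hnat
  push_cast at this
  linarith
end

section
/- Lefschetz number of an automorphism: let T be an automorphism of a chain complex of finite-dimensional vector spaces (a degree-preserving chain map with an inverse chain map). Then the alternating sum of the traces of T on the chain groups equals the alternating sum of the traces of the induced maps on homology: Σ_k (−1)^k tr(T_k on C_k) = Σ_k (−1)^k tr(T_* on H_k). -/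
/-!
In degree `k` the chain map preserves the flag `B_k ⊆ Z_k ⊆ C_k` of boundaries and cycles,
with `Z_k / B_k = H_k` and `C_k / Z_k ≅ B_{k-1}` via `d`. The trace is additive along invariant
flags, so `tr T_k = tr (T on H_k) + tr (T on B_k) + tr (T on B_{k-1})`, and in the alternating
sum the boundary terms telescope away, since `B_{-1} = 0` and `B_n = 0`.
-/

namespace LinearMap

section CommRing

variable {R : Type*} [CommRing R] {M N : Type*} [AddCommGroup M] [Module R M]
  [AddCommGroup N] [Module R N]

theorem trace_eq_of_semiconj (e : M ≃ₗ[R] N) {f : M →ₗ[R] M} {g : N →ₗ[R] N}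
    (h : Function.Semiconj e f g) : trace R M f = trace R N g := by
  rw [← trace_conj' f e]
  congr 1
  ext y
  simpa [LinearEquiv.conj_apply] using h (e.symm y)

variable {g : M →ₗ[R] N} {f : M →ₗ[R] M} {h : N →ₗ[R] N}

theorem map_mem_ker_of_comp_eq (hfg : g ∘ₗ f = h ∘ₗ g) : ∀ x ∈ ker g, f x ∈ ker g := by
  intro x hx
  rw [mem_ker] at hx ⊢
  rw [← comp_apply, hfg, comp_apply, hx, map_zero]

theorem map_mem_range_of_comp_eq (hfg : g ∘ₗ f = h ∘ₗ g) : ∀ y ∈ range g, h y ∈ range g := by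
  rintro _ ⟨x, rfl⟩
  exact ⟨f x, by rw [← comp_apply, hfg, comp_apply]⟩

theorem trace_restrict_range_eq_zero (hg : g = 0) (hh : ∀ y ∈ range g, h y ∈ range g) :
    trace R (range g) (h.restrict hh) = 0 := by
  subst hg
  have : Subsingleton (range (0 : M →ₗ[R] N)) := by
    rw [range_zero]
    infer_instance
  rw [Subsingleton.elim (h.restrict hh) 0, map_zero]

end CommRing

variable {K : Type*} [Field K] {M N : Type*} [AddCommGroup M] [Module K M]
  [AddCommGroup N] [Module K N] [FiniteDimensional K M]

theorem trace_eq_trace_restrict_add_trace_mapQ (f : M →ₗ[K] M) (p : Submodule K M)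
    (hp : ∀ x ∈ p, f x ∈ p) :
    trace K M f = trace K p (f.restrict hp) + trace K (M ⧸ p) (p.mapQ p f hp) := by
  obtain ⟨q, hpq⟩ := p.exists_isCompl
  -- split `f = f ∘ proj_p + f ∘ proj_q` and identify `q` with `M ⧸ p`
  have h_p : trace K M (f ∘ₗ p.projection q hpq) = trace K p (f.restrict hp) := by
    rw [Submodule.projection, ← comp_assoc, trace_comp_comm']
    congr 1
    ext x
    simp [Submodule.projectionOnto_apply_of_mem_left hpq (hp x x.2)]
  have h_q : trace K M (f ∘ₗ q.projection p hpq.symm) = trace K (M ⧸ p) (p.mapQ p f hp) := by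
    rw [Submodule.projection, ← comp_assoc, trace_comp_comm']
    refine trace_eq_of_semiconj (p.quotientEquivOfIsCompl q hpq).symm fun x => ?_
    rw [Submodule.quotientEquivOfIsCompl_symm_apply]
    exact Submodule.mk_quotientEquivOfIsCompl_apply hpq (Submodule.Quotient.mk (f x))
  rw [← h_p, ← h_q, ← map_add, ← comp_add, Submodule.projection_add_projection_eq_id, comp_id]

theorem trace_eq_trace_restrict_ker_add_trace_restrict_range (g : M →ₗ[K] N) {f : M →ₗ[K] M}
    {h : N →ₗ[K] N} (hfg : g ∘ₗ f = h ∘ₗ g) :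
    trace K M f = trace K (ker g) (f.restrict (map_mem_ker_of_comp_eq hfg)) +
      trace K (range g) (h.restrict (map_mem_range_of_comp_eq hfg)) := by
  rw [trace_eq_trace_restrict_add_trace_mapQ f (ker g) (map_mem_ker_of_comp_eq hfg)]
  congr 1
  refine trace_eq_of_semiconj g.quotKerEquivRange fun x => ?_
  obtain ⟨x, rfl⟩ := Submodule.Quotient.mk_surjective _ x
  ext
  simpa using LinearMap.congr_fun hfg x

end LinearMap

namespace CategoryTheory.ShortComplex

open LinearMap

variable {K : Type*} [Field K] (S : ShortComplex (ModuleCat K)) (φ : S ⟶ S)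

theorem moduleCat_f_comp_τ₁ : S.f.hom ∘ₗ φ.τ₁.hom = φ.τ₂.hom ∘ₗ S.f.hom := by
  simpa using congrArg ModuleCat.Hom.hom φ.comm₁₂

theorem moduleCat_g_comp_τ₂ : S.g.hom ∘ₗ φ.τ₂.hom = φ.τ₃.hom ∘ₗ S.g.hom := by
  simpa using congrArg ModuleCat.Hom.hom φ.comm₂₃

noncomputable abbrev moduleCatCyclesMap : ker S.g.hom →ₗ[K] ker S.g.hom :=
  φ.τ₂.hom.restrict (map_mem_ker_of_comp_eq (S.moduleCat_g_comp_τ₂ φ))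

theorem moduleCatToCycles_comp_τ₁ :
    S.moduleCatToCycles ∘ₗ φ.τ₁.hom = S.moduleCatCyclesMap φ ∘ₗ S.moduleCatToCycles := by
  ext x
  exact LinearMap.congr_fun (S.moduleCat_f_comp_τ₁ φ) x

noncomputable def moduleCatLeftHomologyMapData :
    LeftHomologyMapData φ S.moduleCatLeftHomologyData S.moduleCatLeftHomologyData where
  φK := ModuleCat.ofHom (S.moduleCatCyclesMap φ)
  φH := ModuleCat.ofHom (Submodule.mapQ _ _ (S.moduleCatCyclesMap φ)
    (map_mem_range_of_comp_eq (S.moduleCatToCycles_comp_τ₁ φ)))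
  commf' := by
    ext x
    exact (LinearMap.congr_fun (S.moduleCatToCycles_comp_τ₁ φ) x).symm

theorem trace_homologyMap :
    trace K S.homology (homologyMap φ).hom =
      trace K _ (S.moduleCatLeftHomologyMapData φ).φH.hom :=
  trace_eq_of_semiconj S.moduleCatHomologyIso.toLinearEquiv
    (ConcreteCategory.congr_hom ((S.moduleCatLeftHomologyMapData φ).homologyMap_comm))

theorem trace_τ₂_eq [FiniteDimensional K S.X₂] :
    trace K S.X₂ φ.τ₂.hom = trace K S.homology (homologyMap φ).hom +
      trace K (range S.f.hom) (φ.τ₂.hom.restrict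
        (map_mem_range_of_comp_eq (S.moduleCat_f_comp_τ₁ φ))) +
      trace K (range S.g.hom) (φ.τ₃.hom.restrict
        (map_mem_range_of_comp_eq (S.moduleCat_g_comp_τ₂ φ))) := by
  rw [trace_eq_trace_restrict_ker_add_trace_restrict_range S.g.hom (S.moduleCat_g_comp_τ₂ φ),
    trace_eq_trace_restrict_add_trace_mapQ (S.moduleCatCyclesMap φ) _
      (map_mem_range_of_comp_eq (S.moduleCatToCycles_comp_τ₁ φ)),
    trace_homologyMap, add_comm (trace K _ _) (trace K _ _)]
  congr 2
  have h_range : (range S.moduleCatToCycles).map (ker S.g.hom).subtype = range S.f.hom := by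
    rw [← range_comp]
    rfl
  refine trace_eq_of_semiconj ((Submodule.equivMapOfInjective _ (ker S.g.hom).injective_subtype
    _).trans (LinearEquiv.ofEq _ _ h_range)) fun x => ?_
  rfl

end CategoryTheory.ShortComplex

namespace HomologicalComplex

open LinearMap

variable {K : Type*} [Field K] {ι : Type*} {c : ComplexShape ι}
  {C : HomologicalComplex (ModuleCat K) c} (T : C ⟶ C)

theorem moduleCat_d_comp_f (i j : ι) :
    (C.d i j).hom ∘ₗ (T.f i).hom = (T.f j).hom ∘ₗ (C.d i j).hom := by
  rw [← ModuleCat.hom_comp, ← ModuleCat.hom_comp, T.comm]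

noncomputable def boundaryTrace (i j : ι) : K :=
  trace K (range (C.d i j).hom)
    ((T.f j).hom.restrict (map_mem_range_of_comp_eq (moduleCat_d_comp_f T i j)))

theorem boundaryTrace_eq_zero {i j : ι} (h : C.d i j = 0) : boundaryTrace T i j = 0 :=
  trace_restrict_range_eq_zero (by rw [h]; rfl) _

theorem trace_f_eq (j : ι) [FiniteDimensional K (C.X j)] :
    trace K (C.X j) (T.f j).hom = trace K (C.homology j) (homologyMap T j).hom +
      boundaryTrace T (c.prev j) j + boundaryTrace T j (c.next j) :=
  have : FiniteDimensional K (C.sc j).X₂ := ‹FiniteDimensional K (C.X j)›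
  (C.sc j).trace_τ₂_eq ((shortComplexFunctor _ c j).map T)

end HomologicalComplex

namespace ChainComplex

open HomologicalComplex

variable {K : Type*} [Field K] {C : ChainComplex (ModuleCat K) ℕ} (T : C ⟶ C)

-- `k - 1` truncates at `k = 0`, where the last term is the trace on `range (d 0 0) = 0`
theorem trace_f_eq (k : ℕ) [FiniteDimensional K (C.X k)] :
    LinearMap.trace K (C.X k) (T.f k).hom = LinearMap.trace K (C.homology k) (homologyMap T k).hom +
      boundaryTrace T (k + 1) k + boundaryTrace T k (k - 1) := by
  rw [HomologicalComplex.trace_f_eq, prev]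
  obtain _ | k := k <;> simp

end ChainComplex

/-- Hopf trace formula (Lefschetz number of an automorphism): let `T` be an automorphism of a
chain complex `0 → C_n → ⋯ → C_0 → 0` of finite-dimensional vector spaces over a field.
Then the alternating sum of the traces of `T` on the chain groups equals the alternating sum
of the traces of the induced maps on homology. -/
theorem hopf_trace_formula (K : Type) [Field K]
    (C : ChainComplex (ModuleCat K) ℕ) [∀ i : ℕ, FiniteDimensional K (C.X i)]
    (n : ℕ) (hbound : ∀ i : ℕ, n < i → Subsingleton (C.X i))
    (T : C ≅ C) :
    ∑ k ∈ Finset.range (n + 1), (-1 : ℤ) ^ k • LinearMap.trace K (C.X k) (T.hom.f k).hom =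
      ∑ k ∈ Finset.range (n + 1),
        (-1 : ℤ) ^ k • LinearMap.trace K (C.homology k)
          (HomologicalComplex.homologyMap T.hom k).hom := by
  obtain ⟨b, hb⟩ : ∃ b : ℕ → K,
      ∀ k, b k = (-1 : ℤ) ^ k • HomologicalComplex.boundaryTrace T.hom k (k - 1) :=
    ⟨_, fun _ => rfl⟩
  have h_trace (k : ℕ) : (-1 : ℤ) ^ k • LinearMap.trace K (C.X k) (T.hom.f k).hom =
      (-1 : ℤ) ^ k • LinearMap.trace K (C.homology k)
        (HomologicalComplex.homologyMap T.hom k).hom + (b k - b (k + 1)) := by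
    rw [ChainComplex.trace_f_eq, hb, hb, Nat.add_sub_cancel, pow_succ]
    module
  have h_b_zero : b 0 = 0 := by
    rw [hb, HomologicalComplex.boundaryTrace_eq_zero _ (C.shape _ _ (by simp)), smul_zero]
  have h_b_top : b (n + 1) = 0 := by
    have := hbound (n + 1) n.lt_succ_self
    rw [hb, HomologicalComplex.boundaryTrace_eq_zero _
      ((ModuleCat.isZero_of_subsingleton _).eq_of_src _ _), smul_zero]
  rw [Finset.sum_congr rfl fun k _ => h_trace k, Finset.sum_add_distrib, Finset.sum_range_sub',
    h_b_zero, h_b_top, sub_zero, add_zero]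
end
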